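/- arXiv:math/9406230 — 3 statements merged into one kernel-verified Lean document; each statement's English description precedes it below -/
import Mathlib

section
/- For every integer n ≥ 2 and every integer k ≥ 1, the necklace sum ∑_{d | k} μ(k/d) · n^d is strictly positive, where μ denotes the Möbius function. -/
/-!
The term `d = k` contributes `n ^ k`. Every other divisor is smaller than `k` and has
coefficient `μ (k / d) ∈ {-1, 0, 1}`, so the remaining terms are bounded in absolute value
by a sum of distinct powers `n ^ d` with `d < k`, which is less than `n ^ k` as `n ≥ 2`.
-/

open ArithmeticFunction Finset

lemma abs_sum_mul_pow_lt_pow {s : Finset ℕ} {c : ℕ → ℤ} {m k : ℕ} (hm : 2 ≤ m)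
    (hc : ∀ d ∈ s, |c d| ≤ 1) (hs : ∀ d ∈ s, d < k) :
    |∑ d ∈ s, c d * (m : ℤ) ^ d| < (m : ℤ) ^ k :=
  calc |∑ d ∈ s, c d * (m : ℤ) ^ d|
      ≤ ∑ d ∈ s, |c d * (m : ℤ) ^ d| := abs_sum_le_sum_abs _ _
    _ ≤ ∑ d ∈ s, (m : ℤ) ^ d := sum_le_sum fun d hd => by
        rw [abs_mul, abs_of_nonneg (by positivity : (0 : ℤ) ≤ (m : ℤ) ^ d)]
        exact mul_le_of_le_one_left (by positivity) (hc d hd)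
    _ < (m : ℤ) ^ k := by exact_mod_cast Nat.geomSum_lt hm hs

theorem necklace_sum_pos (n k : ℕ) (hn : 2 ≤ n) (hk : 1 ≤ k) :
    0 < ∑ d ∈ k.divisors, (moebius (k / d)) * (n : ℤ) ^ d := by
  rw [← Nat.cons_self_properDivisors (by omega), sum_cons, Nat.div_self hk, moebius_apply_one,
    one_mul]
  have hrest := abs_sum_mul_pow_lt_pow (s := k.properDivisors) (c := fun d => moebius (k / d)) hn
    (fun _ _ => abs_moebius_le_one) fun _ hd => (Nat.mem_properDivisors.1 hd).2
  linarith [neg_abs_le (∑ d ∈ k.properDivisors, moebius (k / d) * (n : ℤ) ^ d)]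
end

section
/- For every integer n ≥ 1 and every integer k ≥ 1, k divides ∑_{d | k} μ(k/d) · n^d (Gauss's necklace congruence). -/
/-!
Let `x` be an integer, fix a prime `p` and write `k = p ^ (a + 1) * m`
with `p ∤ m`. Splitting the divisors of `k` along this coprime factorisation, and using that `μ`
vanishes on `p ^ j` for `j ≥ 2`, the sum `∑_{d ∣ k} μ(k / d) x ^ d` collapses to
`∑_{e ∣ m} μ(m / e) (y_e ^ (p ^ (a + 1)) - y_e ^ (p ^ a))` with `y_e = x ^ e`.
Each bracket is divisible by `p ^ (a + 1)`, by Fermat's little theorem lifted along `p`-th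
powers. As this holds for every prime power dividing `k`, `k` divides the sum.
-/

open ArithmeticFunction Finset
open scoped ArithmeticFunction.Moebius

theorem Nat.Coprime.sum_divisors_mul_eq_sum_sum {M : Type*} [AddCommMonoid M] {m n : ℕ}
    (hmn : m.Coprime n) (f : ℕ → M) :
    ∑ d ∈ (m * n).divisors, f d = ∑ a ∈ m.divisors, ∑ b ∈ n.divisors, f (a * b) := by
  rw [hmn.divisors_mul, sum_map, ← sum_product']
  exact sum_attach _ fun q : ℕ × ℕ => f (q.1 * q.2)

theorem Nat.Coprime.moebius_mul_div_mul {m n a b : ℕ} (hmn : m.Coprime n) (ha : a ∣ m)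
    (hb : b ∣ n) : μ (m * n / (a * b)) = μ (m / a) * μ (n / b) := by
  rw [← Nat.div_mul_div_comm ha hb]
  exact isMultiplicative_moebius.map_mul_of_coprime <|
    (hmn.coprime_dvd_left (Nat.div_dvd_of_dvd ha)).coprime_dvd_right (Nat.div_dvd_of_dvd hb)

theorem Nat.Coprime.sum_divisors_mul_moebius_mul {R : Type*} [CommRing R] {m n : ℕ}
    (hmn : m.Coprime n) (f : ℕ → R) :
    ∑ d ∈ (m * n).divisors, (μ (m * n / d) : R) * f d =
      ∑ b ∈ n.divisors,
        (μ (n / b) : R) * ∑ a ∈ m.divisors, (μ (m / a) : R) * f (a * b) := by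
  rw [hmn.sum_divisors_mul_eq_sum_sum, sum_comm]
  refine sum_congr rfl fun b hb => ?_
  rw [mul_sum]
  refine sum_congr rfl fun a ha => ?_
  rw [hmn.moebius_mul_div_mul (Nat.dvd_of_mem_divisors ha) (Nat.dvd_of_mem_divisors hb)]
  push_cast
  ring

theorem Nat.Prime.sum_divisors_pow_succ_moebius_mul {R : Type*} [CommRing R] {p : ℕ}
    (hp : p.Prime) (a : ℕ) (g : ℕ → R) :
    ∑ c ∈ (p ^ (a + 1)).divisors, (μ (p ^ (a + 1) / c) : R) * g c =
      g (p ^ (a + 1)) - g (p ^ a) := by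
  have hvanish : ∀ i ∈ range a, (μ (p ^ (a + 1) / p ^ i) : R) * g (p ^ i) = 0 := by
    intro i hi
    have hia : i + 2 ≤ a + 1 := by simpa using hi
    rw [Nat.pow_div (by omega) hp.pos, moebius_apply_prime_pow hp (by omega), if_neg (by omega)]
    simp
  have hp_div : p ^ (a + 1) / p ^ a = p := by
    rw [Nat.pow_div (Nat.le_add_right a 1) hp.pos, Nat.add_sub_cancel_left, pow_one]
  rw [Nat.sum_divisors_prime_pow hp, sum_range_succ, sum_range_succ, sum_eq_zero hvanish, hp_div,
    Nat.div_self (pow_pos hp.pos _), moebius_apply_prime hp, moebius_apply_one]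
  push_cast
  ring

theorem Int.prime_pow_succ_dvd_pow_pow_succ_sub {p : ℕ} (hp : p.Prime) (x : ℤ) (a : ℕ) :
    (p : ℤ) ^ (a + 1) ∣ x ^ p ^ (a + 1) - x ^ p ^ a := by
  have hlift := dvd_sub_pow_of_dvd_sub (Int.ModEq.pow_prime_eq_self hp x).symm.dvd a
  rwa [← pow_mul, ← pow_succ'] at hlift

theorem Nat.Prime.pow_dvd_sum_moebius_mul_pow {p j k : ℕ} (hp : p.Prime) (hpj : p ^ j ∣ k)
    (x : ℤ) : (p : ℤ) ^ j ∣ ∑ d ∈ k.divisors, (μ (k / d) : ℤ) * x ^ d := by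
  rcases eq_or_ne k 0 with rfl | hk
  · simp
  obtain ⟨e, m, hpm, rfl⟩ := Nat.exists_eq_pow_mul_and_not_dvd hk p hp.ne_one
  have hcop := hp.coprime_iff_not_dvd.mpr hpm
  have hje : j ≤ e := (Nat.pow_dvd_pow_iff_le_right hp.one_lt).mp
    ((hcop.pow_left j).dvd_of_dvd_mul_right hpj)
  obtain _ | a := e
  · rw [Nat.le_zero.mp hje, pow_zero]
    exact one_dvd _
  refine (pow_dvd_pow _ hje).trans ?_
  have hsplit := (hcop.pow_left (a + 1)).sum_divisors_mul_moebius_mul (R := ℤ) (x ^ ·)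
  simp_rw [hp.sum_divisors_pow_succ_moebius_mul, Int.cast_id] at hsplit
  rw [hsplit]
  refine dvd_sum fun b _ => Dvd.dvd.mul_left ?_ _
  rw [mul_comm (p ^ (a + 1)), mul_comm (p ^ a), pow_mul, pow_mul]
  exact Int.prime_pow_succ_dvd_pow_pow_succ_sub hp _ a

theorem necklace_congruence_general (n k : ℕ) :
    (k : ℤ) ∣ ∑ d ∈ k.divisors, (moebius (k / d)) * (n : ℤ) ^ d := by
  rw [Int.natCast_dvd, Nat.dvd_iff_prime_pow_dvd_dvd]
  intro p j hp hpj
  rw [← Int.natCast_dvd, Nat.cast_pow]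
  exact hp.pow_dvd_sum_moebius_mul_pow hpj n

theorem necklace_congruence (n k : ℕ) (hn : 1 ≤ n) (hk : 1 ≤ k) :
    (k : ℤ) ∣ ∑ d ∈ k.divisors, (moebius (k / d)) * (n : ℤ) ^ d :=
  necklace_congruence_general n k
end

section
/- Define N(n,k) := (1/k) · ∑_{d | k} μ(k/d) · n^d for integers n ≥ 2 and k ≥ 1. Then N(n,k) < 2 if and only if n = 2 and k = 2. -/
/-!
Write `W(n, k) = ∑_{d ∣ k} μ(k/d) n^d`, so that `N(n, k) = W(n, k) / k`. Bounding every Möbius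
coefficient below by `-1` and every proper divisor of `k` above by `k/2` gives
`W(n, k) ≥ n^k - ∑_{1 ≤ d ≤ k/2} n^d ≥ n^k - n^(k/2+1) + n`, which for `k ≥ 3` is at least
`2^(k-1) + 2 ≥ 2k`. For `k = 1` and `k = 2` we have `W = n` and `W = n^2 - n`, and the latter is
below `2k = 4` only for `n = 2`.
-/

open ArithmeticFunction Finset

/-- `N n k = (1/k) ∑_{d ∣ k} μ(k/d) n^d`. -/
def necklaceCount (n k : ℕ) : ℤ :=
  (∑ d ∈ k.divisors, (moebius (k / d)) * (n : ℤ) ^ d) / k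

def primitiveWordCount (n k : ℕ) : ℤ :=
  ∑ d ∈ k.divisors, moebius (k / d) * (n : ℤ) ^ d

lemma sum_Icc_pow_add_le {R : Type*} [Semiring R] [PartialOrder R] [IsOrderedRing R] {x : R}
    (hx : 2 ≤ x) (m : ℕ) : ∑ d ∈ Icc 1 m, x ^ d + x ≤ x ^ (m + 1) := by
  induction m with
  | zero => simp
  | succ m ih =>
    have hpow : 0 ≤ x ^ (m + 1) := pow_nonneg (zero_le_two.trans hx) _
    calc ∑ d ∈ Icc 1 (m + 1), x ^ d + x = (∑ d ∈ Icc 1 m, x ^ d + x) + x ^ (m + 1) := by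
          rw [sum_Icc_succ_top (by omega)]; abel
      _ ≤ 2 * x ^ (m + 1) := by rw [two_mul]; gcongr
      _ ≤ x * x ^ (m + 1) := by gcongr
      _ = x ^ (m + 1 + 1) := (pow_succ' x _).symm

lemma Nat.le_half_of_mem_properDivisors {d k : ℕ} (h : d ∈ k.properDivisors) : d ≤ k / 2 := by
  obtain ⟨⟨c, rfl⟩, hlt⟩ := Nat.mem_properDivisors.1 h
  have hc : 2 ≤ c := by
    by_contra!
    interval_cases c <;> omega
  rw [Nat.le_div_iff_mul_le two_pos]
  exact Nat.mul_le_mul_left d hc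

lemma Nat.properDivisors_subset_Icc_half (k : ℕ) : k.properDivisors ⊆ Icc 1 (k / 2) :=
  fun _ hd ↦ mem_Icc.2 ⟨Nat.pos_of_mem_properDivisors hd, Nat.le_half_of_mem_properDivisors hd⟩

lemma primitiveWordCount_prime (n : ℕ) {p : ℕ} (hp : p.Prime) :
    primitiveWordCount n p = (n : ℤ) ^ p - n := by
  simp [primitiveWordCount, hp.sum_divisors, Nat.div_self hp.pos, moebius_apply_prime hp]
  ring

lemma pow_sub_pow_add_le_primitiveWordCount {n k : ℕ} (hn : 2 ≤ n) (hk : k ≠ 0) :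
    (n : ℤ) ^ k - n ^ (k / 2 + 1) + n ≤ primitiveWordCount n k := by
  have hx : (2 : ℤ) ≤ n := by exact_mod_cast hn
  have hproper : -∑ d ∈ k.properDivisors, (n : ℤ) ^ d ≤
      ∑ d ∈ k.properDivisors, moebius (k / d) * (n : ℤ) ^ d := by
    rw [← sum_neg_distrib]
    gcongr with d
    rw [← neg_one_mul]
    exact mul_le_mul_of_nonneg_right (neg_le_of_abs_le abs_moebius_le_one) (by positivity)
  have hhalf : ∑ d ∈ k.properDivisors, (n : ℤ) ^ d ≤ ∑ d ∈ Icc 1 (k / 2), (n : ℤ) ^ d :=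
    sum_le_sum_of_subset_of_nonneg (Nat.properDivisors_subset_Icc_half k)
      fun _ _ _ ↦ by positivity
  have hgeom := sum_Icc_pow_add_le hx (k / 2)
  rw [primitiveWordCount, ← Nat.cons_self_properDivisors hk, sum_cons, Nat.div_self
    (Nat.pos_of_ne_zero hk), moebius_apply_one, one_mul]
  linarith

lemma two_mul_le_primitiveWordCount_of_three_le {n k : ℕ} (hn : 2 ≤ n) (hk : 3 ≤ k) :
    2 * (k : ℤ) ≤ primitiveWordCount n k := by
  have hbound := pow_sub_pow_add_le_primitiveWordCount hn (by omega : k ≠ 0)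
  have hx : (2 : ℤ) ≤ n := by exact_mod_cast hn
  have hhalf : (n : ℤ) ^ (k / 2 + 1) ≤ n ^ (k - 1) := pow_le_pow_right₀ (by omega) (by omega)
  have hsucc : (n : ℤ) ^ k = n * n ^ (k - 1) := by rw [← pow_succ']; congr 1; omega
  have hbase : (2 : ℤ) ^ (k - 1) ≤ n ^ (k - 1) := pow_le_pow_left₀ (by norm_num) hx _
  have hexp : 2 * (k : ℤ) ≤ 2 ^ (k - 1) + 2 := by
    have h : k - 2 < 2 ^ (k - 2) := Nat.lt_two_pow_self
    have h' : 2 ^ (k - 1) = 2 * 2 ^ (k - 2) := by rw [← pow_succ']; congr 1; omega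
    have : 2 * k ≤ 2 ^ (k - 1) + 2 := by omega
    exact_mod_cast this
  nlinarith

lemma two_mul_le_primitiveWordCount {n k : ℕ} (hn : 2 ≤ n) (hk : 1 ≤ k)
    (h : ¬(n = 2 ∧ k = 2)) : 2 * (k : ℤ) ≤ primitiveWordCount n k := by
  have hx : (2 : ℤ) ≤ n := by exact_mod_cast hn
  rcases (by omega : k = 1 ∨ k = 2 ∨ 3 ≤ k) with rfl | rfl | hk3
  · simpa [primitiveWordCount] using hx
  · have hx3 : (3 : ℤ) ≤ n := by exact_mod_cast (by omega : 3 ≤ n)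
    rw [primitiveWordCount_prime n Nat.prime_two]
    push_cast
    nlinarith
  · exact two_mul_le_primitiveWordCount_of_three_le hn hk3

theorem necklaceCount_lt_two_iff (n k : ℕ) (hn : 2 ≤ n) (hk : 1 ≤ k) :
    necklaceCount n k < 2 ↔ n = 2 ∧ k = 2 := by
  change primitiveWordCount n k / k < 2 ↔ _
  rw [Int.ediv_lt_iff_lt_mul (by exact_mod_cast hk)]
  constructor
  · intro h
    by_contra hne
    linarith [two_mul_le_primitiveWordCount hn hk hne]
  · rintro ⟨rfl, rfl⟩
    rw [primitiveWordCount_prime 2 Nat.prime_two]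
    norm_num
end
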